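/- arXiv:2212.13605 — 2 statements merged into one kernel-verified Lean document; each statement's English description precedes it below -/
import Mathlib

section
/- Let T be a complete first-order theory with infinite models in a countable language L, let M be an ℵ₁-saturated model of T, let A ⊆ M be countable, and let p ∈ S₁(A) be a simple type, witnessed by C ⊆ dcl(A) and the A-definable linear order (D,<). Suppose (D₁,<₁) is another A-definable linear order such that C and (D₁,<₁) also witness the simplicity of p, and suppose <₁ and < agree on C. Then <₁ and < agree on P(M) = C ∪ p(M). -/
open FirstOrder FirstOrder.Language Set Cardinal

universe u v w

namespace PaperDef

variable {L : FirstOrder.Language.{u, v}}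

/-- Valuation assigning parameters from `A` their own values and the
`n` free variables the values given by the tuple `x`. -/
def pval {M : Type w} {A : Set M} {n : ℕ} (x : Fin n → M) : ↥A ⊕ Fin n → M :=
  Sum.elim Subtype.val x

variable {M : Type w} [L.Structure M]

/-- The subset of `M` defined by an `L(A)`-formula in one free variable. -/
def defSet (A : Set M) (δ : L.Formula (↥A ⊕ Fin 1)) : Set M :=
  {a | δ.Realize (pval ![a])}

/-- The binary relation on `M` defined by an `L(A)`-formula in two free variables. -/
def defRel (A : Set M) (φ : L.Formula (↥A ⊕ Fin 2)) : M → M → Prop :=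
  fun a b => φ.Realize (pval ![a, b])

/-- The relation defined by `φ`, guarded so as to only hold on the set defined by `δ`
(the paper's convention of writing `x < y` for `x ∈ D ∧ y ∈ D ∧ x < y`). -/
def gRel (A : Set M) (δ : L.Formula (↥A ⊕ Fin 1)) (φ : L.Formula (↥A ⊕ Fin 2)) :
    M → M → Prop :=
  fun a b => a ∈ defSet A δ ∧ b ∈ defSet A δ ∧ defRel A φ a b

/-- The set of realizations in `M` of a set of `L(A)`-formulas in one free variable. -/
def typeSet (A : Set M) (p : Set (L.Formula (↥A ⊕ Fin 1))) : Set M :=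
  {a | ∀ φ ∈ p, φ.Realize (pval ![a])}

/-- A set of `L(A)`-formulas in `n` free variables is finitely satisfiable in `M`. -/
def FinSat (A : Set M) {n : ℕ} (p : Set (L.Formula (↥A ⊕ Fin n))) : Prop :=
  ∀ s : Finset (L.Formula (↥A ⊕ Fin n)), ↑s ⊆ p →
    ∃ x : Fin n → M, ∀ φ ∈ s, Formula.Realize φ (pval x)

/-- A complete `n`-type over `A` (relative to the complete theory of `M` with
parameters in `A`): a maximal finitely satisfiable set of formulas. -/
def IsCompleteType (A : Set M) {n : ℕ} (p : Set (L.Formula (↥A ⊕ Fin n))) : Prop :=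
  FinSat A p ∧ ∀ φ : L.Formula (↥A ⊕ Fin n), φ ∈ p ∨ BoundedFormula.not φ ∈ p

/-- `M` is ℵ₀-saturated: every finitely satisfiable set of formulas in one free
variable with parameters from a finite subset of `M` is realized in `M`. -/
def IsAleph0Saturated (L : FirstOrder.Language.{u, v}) (M : Type w) [L.Structure M] : Prop :=
  ∀ A : Set M, A.Finite → ∀ p : Set (L.Formula (↥A ⊕ Fin 1)),
    FinSat A p → (typeSet A p).Nonempty

/-- `M` is ℵ₁-saturated: every finitely satisfiable set of formulas in one free
variable with parameters from a countable subset of `M` is realized in `M`. -/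
def IsAleph1Saturated (L : FirstOrder.Language.{u, v}) (M : Type w) [L.Structure M] : Prop :=
  ∀ A : Set M, A.Countable → ∀ p : Set (L.Formula (↥A ⊕ Fin 1)),
    FinSat A p → (typeSet A p).Nonempty

/-- The definable closure of `A` in `M`. -/
def dclSet (L : FirstOrder.Language.{u, v}) {M : Type w} [L.Structure M] (A : Set M) : Set M :=
  {a | ∃ φ : L.Formula (↥A ⊕ Fin 1),
    φ.Realize (pval ![a]) ∧ ∀ b : M, φ.Realize (pval ![b]) → b = a}

/-- `r` is a (strict) linear order on the set `D`. -/
def IsLinearOn {X : Type*} (r : X → X → Prop) (D : Set X) : Prop :=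
  (∀ a ∈ D, ¬r a a) ∧
  (∀ a ∈ D, ∀ b ∈ D, ∀ c ∈ D, r a b → r b c → r a c) ∧
  (∀ a ∈ D, ∀ b ∈ D, a = b ∨ r a b ∨ r b a)

/-- The linear order `r` on `D` is discrete: every element other than the maximum
has an immediate successor and every element other than the minimum has an
immediate predecessor. -/
def IsDiscreteOn {X : Type*} (r : X → X → Prop) (D : Set X) : Prop :=
  (∀ a ∈ D, (∃ b ∈ D, r a b) → ∃ b ∈ D, r a b ∧ ∀ c ∈ D, r a c → c = b ∨ r b c) ∧
  (∀ a ∈ D, (∃ b ∈ D, r b a) → ∃ b ∈ D, r b a ∧ ∀ c ∈ D, r c a → c = b ∨ r c b)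

/-- `C` is an initial part of the order `(D, r)`. -/
def IsInitialPart {X : Type*} (r : X → X → Prop) (D C : Set X) : Prop :=
  C ⊆ D ∧ ∀ c ∈ C, ∀ d ∈ D, r d c → d ∈ C

/-- `(C, r)` has order type ω: `C` is infinite and every element has only
finitely many predecessors in `C`. -/
def HasOrderTypeOmega {X : Type*} (r : X → X → Prop) (C : Set X) : Prop :=
  C.Infinite ∧ ∀ c ∈ C, {c' ∈ C | r c' c}.Finite

/-- `p` is a simple type over `A`, witnessed by `C ⊆ dcl(A)` and the `A`-definable
linear order `(D, <)` given by the formulas `δ` (defining `D`) and `lt` (defining `<`). -/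
def IsSimpleWitness (A : Set M) (p : Set (L.Formula (↥A ⊕ Fin 1))) (C : Set M)
    (δ : L.Formula (↥A ⊕ Fin 1)) (lt : L.Formula (↥A ⊕ Fin 2)) : Prop :=
  IsCompleteType A p ∧
  C.Infinite ∧
  C ⊆ dclSet L A ∧
  IsLinearOn (gRel A δ lt) (defSet A δ) ∧
  IsInitialPart (gRel A δ lt) (defSet A δ) C ∧
  HasOrderTypeOmega (gRel A δ lt) C ∧
  ∀ φ : L.Formula (↥A ⊕ Fin 1),
    φ ∈ p ↔ {c ∈ C | ¬φ.Realize (pval ![c])}.Finite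

/-- `b` is the immediate successor of `a` in the order `(P, r)`. -/
def SuccIn {X : Type*} (r : X → X → Prop) (P : Set X) (a b : X) : Prop :=
  a ∈ P ∧ b ∈ P ∧ r a b ∧ ∀ c ∈ P, r a c → c = b ∨ r b c

/-- `zIter S k a b` says that `b = Sᵏ(a)`, where negative iterates of `S` are
interpreted via the (partial) inverse of `S`. -/
def zIter {X : Type*} (S : X → X) (k : ℤ) (a b : X) : Prop :=
  if 0 ≤ k then S^[k.toNat] a = b else S^[(-k).toNat] b = a

/-- Isomorphism as an equivalence relation on countably infinite models of `T`
(with underlying set in `Type 0`). -/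
def countableModelSetoid (T : L.Theory) :
    Setoid {N : Theory.ModelType.{u, v, 0} T // Countable N ∧ Infinite N} where
  r N₁ N₂ := Nonempty (N₁.1 ≃[L] N₂.1)
  iseqv := ⟨fun N => ⟨FirstOrder.Language.Equiv.refl L N.1⟩,
    fun e => e.map FirstOrder.Language.Equiv.symm,
    fun e f => Nonempty.map2 (fun i j => j.comp i) e f⟩

/-- The number of countably infinite models of `T` up to isomorphism. -/
noncomputable def numCountableModels (T : L.Theory) : Cardinal :=
  #(Quotient (countableModelSetoid T))

section Helpers

variable {A : Set M}

lemma pval_comp_map {n m : ℕ} (v : Fin n → M) (g : Fin m → Fin n) :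
    (pval (A := A) v) ∘ Sum.map id g = pval (v ∘ g) := by
  funext z; rcases z with a | i <;> rfl

/-- Relabel a one-variable formula into a two-variable formula, using variable `i`. -/
def lift1 (i : Fin 2) (φ : L.Formula (↥A ⊕ Fin 1)) : L.Formula (↥A ⊕ Fin 2) :=
  φ.relabel (Sum.map id (fun _ => i))

lemma realize_lift1 (i : Fin 2) (φ : L.Formula (↥A ⊕ Fin 1)) (v : Fin 2 → M) :
    (lift1 i φ).Realize (pval v) ↔ φ.Realize (pval ![v i]) := by
  rw [lift1, Formula.realize_relabel, pval_comp_map]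
  have h : v ∘ (fun _ : Fin 1 => i) = ![v i] := by
    funext j; fin_cases j <;> simp
  rw [h]

/-- Swap the two free variables of a two-variable formula. -/
def swapF (φ : L.Formula (↥A ⊕ Fin 2)) : L.Formula (↥A ⊕ Fin 2) :=
  φ.relabel (Sum.map id ![1, 0])

lemma realize_swapF (φ : L.Formula (↥A ⊕ Fin 2)) (x y : M) :
    (swapF φ).Realize (pval (A := A) ![x, y]) ↔ φ.Realize (pval ![y, x]) := by
  rw [swapF, Formula.realize_relabel, pval_comp_map]
  have h : (![x, y] : Fin 2 → M) ∘ ![1, 0] = ![y, x] := by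
    funext j; fin_cases j <;> simp
  rw [h]

/-- Existentially quantify the second free variable of a two-variable formula. -/
def exProj (ψ : L.Formula (↥A ⊕ Fin 2)) : L.Formula (↥A ⊕ Fin 1) :=
  BoundedFormula.ex (BoundedFormula.relabel
    (Sum.elim (fun a => Sum.inl (Sum.inl a)) ![Sum.inl (Sum.inr 0), Sum.inr 0] :
      ↥A ⊕ Fin 2 → (↥A ⊕ Fin 1) ⊕ Fin 1) ψ : L.BoundedFormula (↥A ⊕ Fin 1) 1)

lemma realize_exProj (ψ : L.Formula (↥A ⊕ Fin 2)) (b : M) :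
    (exProj ψ).Realize (pval (A := A) ![b]) ↔ ∃ x : M, ψ.Realize (pval ![b, x]) := by
  rw [exProj, Formula.Realize, BoundedFormula.realize_ex]
  apply exists_congr; intro x
  rw [BoundedFormula.realize_relabel]
  have h1 : (Sum.elim (pval (A := A) ![b])
      (Fin.snoc (default : Fin 0 → M) x ∘ Fin.castAdd 0) ∘
      (Sum.elim (fun a => Sum.inl (Sum.inl a)) ![Sum.inl (Sum.inr 0), Sum.inr 0])) =
      pval ![b, x] := by
    funext z
    rcases z with a | i
    · rfl
    · fin_cases i <;> simp [pval, Fin.snoc]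
  have h2 : (Fin.snoc (default : Fin 0 → M) x ∘ Fin.natAdd 1) = (default : Fin 0 → M) := by
    funext i; exact i.elim0
  rw [h1, h2]
  rfl

lemma real_mem_D {p : Set (L.Formula (↥A ⊕ Fin 1))} {C : Set M}
    {δ : L.Formula (↥A ⊕ Fin 1)} {lt : L.Formula (↥A ⊕ Fin 2)}
    (hp : IsSimpleWitness A p C δ lt) :
    ∀ b ∈ typeSet A p, b ∈ defSet A δ := by
  obtain ⟨hcomp, hCinf, hCdcl, hlin, hinit, homega, hmem⟩ := hp
  have hδp : δ ∈ p := by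
    rw [hmem]
    refine Set.Finite.subset Set.finite_empty ?_
    rintro c ⟨hc, hnc⟩
    exact hnc (hinit.1 hc)
  intro b hb
  exact hb δ hδp

lemma c_lt_real {p : Set (L.Formula (↥A ⊕ Fin 1))} {C : Set M}
    {δ : L.Formula (↥A ⊕ Fin 1)} {lt : L.Formula (↥A ⊕ Fin 2)}
    (hp : IsSimpleWitness A p C δ lt) :
    ∀ c ∈ C, ∀ b ∈ typeSet A p, gRel A δ lt c b := by
  intro c hc b hb
  obtain ⟨hcomp, hCinf, hCdcl, hlin, hinit, homega, hmem⟩ := hp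
  obtain ⟨χ, hχc, hχuniq⟩ := hCdcl hc
  set ρ : L.Formula (↥A ⊕ Fin 1) :=
    exProj (lift1 1 χ ⊓ (lift1 1 δ ⊓ (lift1 0 δ ⊓ swapF lt))) with hρdef
  have hρreal : ∀ y : M, ρ.Realize (pval ![y]) ↔
      ∃ x, χ.Realize (pval ![x]) ∧ gRel A δ lt x y := by
    intro y
    rw [hρdef, realize_exProj]
    apply exists_congr; intro x
    rw [Formula.realize_inf, Formula.realize_inf, Formula.realize_inf,
      realize_lift1, realize_lift1, realize_lift1, realize_swapF]
    simp only [gRel, defSet, defRel, Set.mem_setOf_eq, Matrix.cons_val_one,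
      Matrix.head_cons, Matrix.cons_val_zero]
  have hρp : ρ ∈ p := by
    rw [hmem]
    refine Set.Finite.subset ((homega.2 c hc).insert c) ?_
    rintro c' ⟨hc', hnot⟩
    rw [Set.mem_insert_iff]
    by_contra hn
    push_neg at hn
    obtain ⟨hne, hn2⟩ := hn
    apply hnot
    rw [hρreal]
    refine ⟨c, hχc, ?_⟩
    rcases hlin.2.2 c (hinit.1 hc) c' (hinit.1 hc') with h | h | h
    · exact absurd h.symm hne
    · exact h
    · exact absurd (⟨hc', h⟩ : c' ∈ {c'' ∈ C | gRel A δ lt c'' c}) hn2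
  have hbρ := hb ρ hρp
  rw [hρreal] at hbρ
  obtain ⟨x, hχx, hr⟩ := hbρ
  rwa [hχuniq x hχx] at hr

lemma aux8 {p : Set (L.Formula (↥A ⊕ Fin 1))} {C : Set M}
    {δ : L.Formula (↥A ⊕ Fin 1)} {lt : L.Formula (↥A ⊕ Fin 2)}
    {δ₁ : L.Formula (↥A ⊕ Fin 1)} {lt₁ : L.Formula (↥A ⊕ Fin 2)}
    (hp : IsSimpleWitness A p C δ lt)
    (hp₁ : IsSimpleWitness A p C δ₁ lt₁)
    (hagree : ∀ c ∈ C, ∀ c' ∈ C, gRel A δ lt c c' → gRel A δ₁ lt₁ c c') :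
    ∀ a ∈ C ∪ typeSet A p, ∀ b ∈ C ∪ typeSet A p,
      gRel A δ lt a b → gRel A δ₁ lt₁ a b := by
  have hcb := c_lt_real hp
  have hcb₁ := c_lt_real hp₁
  have hD := real_mem_D hp
  have hD₁ := real_mem_D hp₁
  have hcomp := hp.1
  have hCinf := hp.2.1
  have hlin := hp.2.2.2.1
  have hlin₁ := hp₁.2.2.2.1
  have hinit := hp.2.2.2.2.1
  have hmem := hp.2.2.2.2.2.2
  have asym : ∀ x y, gRel A δ lt x y → ¬ gRel A δ lt y x := by
    intro x y h h'
    exact hlin.1 x h.1 (hlin.2.1 x h.1 y h.2.1 x h.1 h h')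
  have asym₁ : ∀ x y, gRel A δ₁ lt₁ x y → ¬ gRel A δ₁ lt₁ y x := by
    intro x y h h'
    exact hlin₁.1 x h.1 (hlin₁.2.1 x h.1 y h.2.1 x h.1 h h')
  intro a ha b hb hab
  rcases ha with haC | haP
  · rcases hb with hbC | hbP
    · exact hagree a haC b hbC hab
    · exact hcb₁ a haC b hbP
  · rcases hb with hbC | hbP
    · exact absurd hab (asym b a (hcb b hbC a haP))
    · by_cases hab' : a = b
      · subst hab'
        exact absurd hab (fun h => hlin.1 a h.1 h)
      · rcases hlin₁.2.2 a (hD₁ a haP) b (hD₁ b hbP) with h | h | h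
        · exact absurd h hab'
        · exact h
        · exfalso
          set θ : L.Formula (↥A ⊕ Fin 1) :=
            exProj ((lift1 1 δ ⊓ (lift1 0 δ ⊓ swapF lt)) ⊓
              (lift1 0 δ₁ ⊓ (lift1 1 δ₁ ⊓ lt₁))) with hθdef
          have hθreal : ∀ y, θ.Realize (pval ![y]) ↔
              ∃ x, gRel A δ lt x y ∧ gRel A δ₁ lt₁ y x := by
            intro y
            rw [hθdef, realize_exProj]
            apply exists_congr; intro x
            rw [Formula.realize_inf, Formula.realize_inf, Formula.realize_inf,
              Formula.realize_inf, Formula.realize_inf,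
              realize_lift1, realize_lift1, realize_lift1, realize_lift1, realize_swapF]
            simp only [gRel, defSet, defRel, Set.mem_setOf_eq, Matrix.cons_val_one,
              Matrix.head_cons, Matrix.cons_val_zero]
          have hbθ : θ.Realize (pval ![b]) := (hθreal b).2 ⟨a, hab, h⟩
          have hθp : θ ∈ p := by
            rcases hcomp.2 θ with h' | h'
            · exact h'
            · have := hbP _ h'
              rw [Formula.realize_not] at this
              exact absurd hbθ this
          have hfin := (hmem θ).1 hθp
          obtain ⟨c, hcC, hcθ⟩ : ∃ c ∈ C, θ.Realize (pval ![c]) := by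
            obtain ⟨c, hc⟩ := (hCinf.diff hfin).nonempty
            exact ⟨c, hc.1, not_not.1 (fun hn => hc.2 ⟨hc.1, hn⟩)⟩
          obtain ⟨x, hxc, hcx⟩ := (hθreal c).1 hcθ
          have hxC : x ∈ C := hinit.2 c hcC x hxc.1 hxc
          exact asym₁ c x hcx (hagree x hxC c hcC hxc)

end Helpers

/-- Lemma 2(d). If `C` together with `(D, <)`, and `C` together
with `(D₁, <₁)`, both witness the simplicity of `p`, and the two orders agree on
`C`, then they agree on `P(M) = C ∪ p(M)`. -/
theorem statement8 (L : FirstOrder.Language.{u, v}) (hL : L.card ≤ ℵ₀)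
    (T : L.Theory) (hT : T.IsComplete)
    (M : Type w) [L.Structure M] (hMT : M ⊨ T) (hMinf : Infinite M)
    (hsat : IsAleph1Saturated L M)
    (A : Set M) (hA : A.Countable)
    (p : Set (L.Formula (↥A ⊕ Fin 1))) (C : Set M)
    (δ : L.Formula (↥A ⊕ Fin 1)) (lt : L.Formula (↥A ⊕ Fin 2))
    (δ₁ : L.Formula (↥A ⊕ Fin 1)) (lt₁ : L.Formula (↥A ⊕ Fin 2))
    (hp : IsSimpleWitness A p C δ lt)
    (hp₁ : IsSimpleWitness A p C δ₁ lt₁)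
    (hagree : ∀ c ∈ C, ∀ c' ∈ C, (gRel A δ lt c c' ↔ gRel A δ₁ lt₁ c c')) :
    ∀ a ∈ C ∪ typeSet A p, ∀ b ∈ C ∪ typeSet A p,
      (gRel A δ lt a b ↔ gRel A δ₁ lt₁ a b) := by
  intro a ha b hb
  exact ⟨aux8 hp hp₁ (fun c hc c' hc' => (hagree c hc c' hc').1) a ha b hb,
    aux8 hp₁ hp (fun c hc c' hc' => (hagree c hc c' hc').2) a ha b hb⟩

end PaperDef
end

section
/- Let T be a complete first-order theory with infinite models in a countable language L such that the space S₂(T) of complete 2-types over ∅ is countable, let M be an ℵ₁-saturated model of T, and let (D,<) be an infinite discrete linear order definable in M without parameters. Then for every c ∈ D there exists a simple type p ∈ S₁({c}), i.e., a complete 1-type over {c} which is simple, witnessed by some infinite C ⊆ dcl({c}) and some {c}-definable linear order. -/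
open FirstOrder FirstOrder.Language Set Cardinal

universe u v w

namespace PaperDef

variable {L : FirstOrder.Language.{u, v}}

variable {M : Type w} [L.Structure M]

section Aux

/-- extend a valuation on `α ⊕ Fin m` to `α ⊕ Fin (m+1)` with value `x` at the last slot -/
def extend {α : Type*} {m : ℕ} (v : α ⊕ Fin m → M) (x : M) : α ⊕ Fin (m + 1) → M :=
  Sum.elim (fun a => v (Sum.inl a))
    (fun i => if h : (i : ℕ) < m then v (Sum.inr ⟨i, h⟩) else x)

/-- the relabeling used for existential quantification over the last variable -/
def exNf {α : Type*} {m : ℕ} : α ⊕ Fin (m + 1) → (α ⊕ Fin m) ⊕ Unit :=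
  Sum.elim (fun a => Sum.inl (Sum.inl a))
    (fun i => if h : (i : ℕ) < m then Sum.inl (Sum.inr ⟨i, h⟩) else Sum.inr ())

/-- existential quantification over the last variable -/
noncomputable def exN {α : Type*} {m : ℕ} (φ : L.Formula (α ⊕ Fin (m + 1))) :
    L.Formula (α ⊕ Fin m) :=
  Formula.iExs Unit (φ.relabel exNf)

lemma exNf_elim {α : Type*} {m : ℕ} (v : α ⊕ Fin m → M) (i : Unit → M) :
    (fun a => Sum.elim v i (exNf a)) = extend v (i ()) := by
  funext z
  rcases z with a | j
  · rfl
  · simp only [exNf, extend, Sum.elim_inr]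
    by_cases h : (j : ℕ) < m <;> simp [h]

lemma realize_exN {α : Type*} {m : ℕ} (φ : L.Formula (α ⊕ Fin (m + 1)))
    (v : α ⊕ Fin m → M) :
    (exN φ).Realize v ↔ ∃ x : M, φ.Realize (extend v x) := by
  rw [exN, Formula.realize_iExs]
  simp only [Formula.realize_relabel, Function.comp_def]
  constructor
  · rintro ⟨i, hi⟩
    rw [exNf_elim] at hi
    exact ⟨i (), hi⟩
  · rintro ⟨x, hx⟩
    refine ⟨fun _ => x, ?_⟩
    rw [exNf_elim]
    exact hx

lemma extend_pval1 {A : Set M} (a x : M) :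
    extend (pval (A := A) ![a]) x = pval ![a, x] := by
  funext z
  rcases z with e | i
  · rfl
  · rcases i with ⟨i, hi⟩
    interval_cases i <;> rfl

lemma extend_pval2 {A : Set M} (a b x : M) :
    extend (pval (A := A) ![a, b]) x = pval ![a, b, x] := by
  funext z
  rcases z with e | i
  · rfl
  · rcases i with ⟨i, hi⟩
    interval_cases i <;> rfl

/-- a 1-variable formula placed at variable `j` in an `n`-variable context. -/
def atVar1 {A : Set M} {n : ℕ} (φ : L.Formula (↥A ⊕ Fin 1)) (j : Fin n) :
    L.Formula (↥A ⊕ Fin n) :=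
  φ.relabel (Sum.map id (fun _ => j))

lemma realize_atVar1 {A : Set M} {n : ℕ} (φ : L.Formula (↥A ⊕ Fin 1)) (j : Fin n)
    (xs : Fin n → M) :
    (atVar1 φ j).Realize (pval xs) ↔ φ.Realize (pval ![xs j]) := by
  rw [atVar1, Formula.realize_relabel]
  apply iff_of_eq; congr 1
  funext z
  rcases z with e | i
  · rfl
  · rcases i with ⟨i, hi⟩
    interval_cases i
    rfl

/-- a 2-variable formula placed at variables `(j, k)` in an `n`-variable context. -/
def atVar2 {A : Set M} {n : ℕ} (φ : L.Formula (↥A ⊕ Fin 2)) (j k : Fin n) :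
    L.Formula (↥A ⊕ Fin n) :=
  φ.relabel (Sum.map id ![j, k])

lemma realize_atVar2 {A : Set M} {n : ℕ} (φ : L.Formula (↥A ⊕ Fin 2)) (j k : Fin n)
    (xs : Fin n → M) :
    (atVar2 φ j k).Realize (pval xs) ↔ φ.Realize (pval ![xs j, xs k]) := by
  rw [atVar2, Formula.realize_relabel]
  apply iff_of_eq; congr 1
  funext z
  rcases z with e | i
  · rfl
  · rcases i with ⟨i, hi⟩
    interval_cases i <;> rfl

/-- lift a formula over `∅` to a formula over `{c}`. -/
def liftF {n : ℕ} (c : M) (φ : L.Formula (↥(∅ : Set M) ⊕ Fin n)) :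
    L.Formula (↥({c} : Set M) ⊕ Fin n) :=
  φ.relabel (Sum.map (fun _ => ⟨c, rfl⟩) id)

lemma realize_liftF {n : ℕ} (c : M) (φ : L.Formula (↥(∅ : Set M) ⊕ Fin n))
    (xs : Fin n → M) :
    (liftF c φ).Realize (pval xs) ↔ φ.Realize (pval xs) := by
  rw [liftF, Formula.realize_relabel]
  apply iff_of_eq; congr 1
  funext z
  rcases z with e | i
  · exact absurd e.2 (Set.notMem_empty e.1)
  · rfl

/-- the formula `lt(x, c)` over the parameter set `{c}`. -/
def ltcF (c : M) (lt : L.Formula (↥(∅ : Set M) ⊕ Fin 2)) :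
    L.Formula (↥({c} : Set M) ⊕ Fin 1) :=
  lt.relabel (Sum.elim (fun _ => Sum.inl ⟨c, rfl⟩) ![Sum.inr 0, Sum.inl ⟨c, rfl⟩])

lemma realize_ltcF (c : M) (lt : L.Formula (↥(∅ : Set M) ⊕ Fin 2)) (a : M) :
    (ltcF c lt).Realize (pval ![a]) ↔ defRel (∅ : Set M) lt a c := by
  rw [ltcF, Formula.realize_relabel]
  unfold defRel
  apply iff_of_eq; congr 1
  funext z
  rcases z with e | i
  · exact absurd e.2 (Set.notMem_empty e.1)
  · rcases i with ⟨i, hi⟩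
    interval_cases i <;> rfl

/-- the translation of a formula over `{c}` in one variable to a formula over `∅`
in two variables, with the parameter `c` replaced by the second variable. -/
def toTwo (c : M) (φ : L.Formula (↥({c} : Set M) ⊕ Fin 1)) :
    L.Formula (↥(∅ : Set M) ⊕ Fin 2) :=
  φ.relabel (Sum.elim (fun _ => Sum.inr 1) (fun _ => Sum.inr 0))

lemma realize_toTwo (c : M) (φ : L.Formula (↥({c} : Set M) ⊕ Fin 1)) (a : M) :
    (toTwo c φ).Realize (pval ![a, c]) ↔ φ.Realize (pval ![a]) := by
  rw [toTwo, Formula.realize_relabel]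
  apply iff_of_eq; congr 1
  funext z
  rcases z with e | i
  · have : e.1 = c := e.2
    simp [pval, this]
  · rcases i with ⟨i, hi⟩
    interval_cases i
    rfl

/-- the formula `x = c` over the parameter set `{c}`. -/
def eqParam (c : M) : L.Formula (↥({c} : Set M) ⊕ Fin 1) :=
  Term.equal (Term.var (Sum.inr 0) : L.Term _) (Term.var (Sum.inl ⟨c, rfl⟩))

lemma realize_eqParam (c : M) (b : M) :
    (eqParam (L := L) c).Realize (pval ![b]) ↔ b = c := by
  unfold eqParam
  rw [Formula.realize_equal]
  simp [pval]

section Aux2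

variable (δ : L.Formula (↥(∅ : Set M) ⊕ Fin 1)) (lt : L.Formula (↥(∅ : Set M) ⊕ Fin 2))

/-- the successor formula: `succF δ lt` says "v1 is the immediate successor of v0". -/
noncomputable def succF : L.Formula (↥(∅ : Set M) ⊕ Fin 2) :=
  atVar1 δ 0 ⊓ atVar1 δ 1 ⊓ atVar2 lt 0 1 ⊓
    (exN (atVar1 δ 2 ⊓ atVar2 lt 0 2 ⊓ atVar2 lt 2 1)).not

lemma realize_succF (y b : M) :
    (succF δ lt).Realize (pval ![y, b]) ↔
      (y ∈ defSet (∅ : Set M) δ ∧ b ∈ defSet (∅ : Set M) δ ∧ defRel (∅ : Set M) lt y b ∧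
        ¬ ∃ z, z ∈ defSet (∅ : Set M) δ ∧ defRel (∅ : Set M) lt y z ∧
          defRel (∅ : Set M) lt z b) := by
  unfold succF
  simp only [Formula.realize_inf, Formula.realize_not, realize_exN, extend_pval2,
    realize_atVar1, realize_atVar2, Matrix.cons_val_zero, Matrix.cons_val_one,
    Matrix.head_cons, Matrix.cons_val_two, Matrix.tail_cons, defSet, defRel,
    Set.mem_setOf_eq]
  constructor
  · rintro ⟨⟨⟨h1, h2⟩, h3⟩, h4⟩
    exact ⟨h1, h2, h3, fun ⟨z, hz1, hz2, hz3⟩ => h4 ⟨z, ⟨hz1, hz2⟩, hz3⟩⟩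
  · rintro ⟨h1, h2, h3, h4⟩
    exact ⟨⟨⟨h1, h2⟩, h3⟩, fun ⟨z, ⟨hz1, hz2⟩, hz3⟩ => h4 ⟨z, hz1, hz2, hz3⟩⟩

/-- the formula saying "x is the n-th successor of c". -/
noncomputable def chainF (c : M) : ℕ → L.Formula (↥({c} : Set M) ⊕ Fin 1)
  | 0 => eqParam c
  | n + 1 => exN (atVar1 (chainF c n) 1 ⊓ liftF c (atVar2 (succF δ lt) 1 0))

lemma realize_chainF_succ (c : M) (n : ℕ) (b : M) :
    (chainF δ lt c (n + 1)).Realize (pval ![b]) ↔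
      ∃ y, (chainF δ lt c n).Realize (pval ![y]) ∧ (succF δ lt).Realize (pval ![y, b]) := by
  show (exN _).Realize _ ↔ _
  rw [realize_exN]
  simp only [Formula.realize_inf, realize_atVar1, realize_liftF, realize_atVar2,
    extend_pval1, Matrix.cons_val_zero, Matrix.cons_val_one, Matrix.head_cons]

end Aux2

section Aux3

lemma not_countable_funBool : ¬ Countable (ℕ → Bool) := by
  intro h
  obtain ⟨f, hf⟩ := exists_injective_nat (ℕ → Bool)
  classical
  let g : ℕ → Bool := fun n => if h : ∃ s : ℕ → Bool, f s = n then ! (h.choose n) else true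
  have h1 : ∃ s : ℕ → Bool, f s = f g := ⟨g, rfl⟩
  have h3 : g (f g) = ! (h1.choose (f g)) := dif_pos h1
  have h2 : h1.choose = g := hf h1.choose_spec
  rw [h2] at h3
  simp at h3

def treeNode {σ : Type*} (top : σ) (step : σ → Bool → σ) : List Bool → σ
  | [] => top
  | b :: t => step (treeNode top step t) b

def branchList (s : ℕ → Bool) : ℕ → List Bool
  | 0 => []
  | n + 1 => s n :: branchList s n

lemma branchList_congr {s s' : ℕ → Bool} :
    ∀ n, (∀ i, i < n → s i = s' i) → branchList s n = branchList s' n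
  | 0, _ => rfl
  | n + 1, h => by
    rw [branchList, branchList, h n (Nat.lt_succ_self n),
      branchList_congr n (fun i hi => h i (Nat.lt_succ_of_lt hi))]

end Aux3

end Aux

section Main

lemma main_lemma
    (hsat : IsAleph1Saturated L M)
    (hS2 : {q : Set (L.Formula (↥(∅ : Set M) ⊕ Fin 2)) |
              IsCompleteType (∅ : Set M) q}.Countable)
    (δ : L.Formula (↥(∅ : Set M) ⊕ Fin 1)) (lt : L.Formula (↥(∅ : Set M) ⊕ Fin 2))
    (hlin : IsLinearOn (gRel (∅ : Set M) δ lt) (defSet (∅ : Set M) δ))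
    (hsucc : ∀ a ∈ defSet (∅ : Set M) δ,
      (∃ b ∈ defSet (∅ : Set M) δ, gRel (∅ : Set M) δ lt a b) →
      ∃ b ∈ defSet (∅ : Set M) δ, gRel (∅ : Set M) δ lt a b ∧
        ∀ e ∈ defSet (∅ : Set M) δ, gRel (∅ : Set M) δ lt a e →
          e = b ∨ gRel (∅ : Set M) δ lt b e)
    (c : M) (hc : c ∈ defSet (∅ : Set M) δ)
    (hup : {d ∈ defSet (∅ : Set M) δ | gRel (∅ : Set M) δ lt c d}.Infinite) :
    ∃ (p : Set (L.Formula (↥({c} : Set M) ⊕ Fin 1))) (C : Set M)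
      (δ₁ : L.Formula (↥({c} : Set M) ⊕ Fin 1)) (lt₁ : L.Formula (↥({c} : Set M) ⊕ Fin 2)),
      IsSimpleWitness ({c} : Set M) p C δ₁ lt₁ := by
  classical
  obtain ⟨irr, htrans, total⟩ := hlin
  set D := defSet (∅ : Set M) δ with hDdef
  set r := gRel (∅ : Set M) δ lt with hrdef
  -- the successor chain
  have key : ∀ a : {x : M // x ∈ D ∧ {d ∈ D | r x d}.Infinite},
      ∃ b : {x : M // x ∈ D ∧ {d ∈ D | r x d}.Infinite}, SuccIn r D a.1 b.1 := by
    rintro ⟨a, haD, hainf⟩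
    have hne : ∃ b ∈ D, r a b := by
      obtain ⟨d, hdD, hrd⟩ := hainf.nonempty
      exact ⟨d, hdD, hrd⟩
    obtain ⟨b, hbD, hrab, hbsucc⟩ := hsucc a haD hne
    have hbinf : {d ∈ D | r b d}.Infinite := by
      refine Set.Infinite.mono ?_ (hainf.diff (Set.finite_singleton b))
      rintro d ⟨⟨hdD, hrad⟩, hdb⟩
      rcases hbsucc d hdD hrad with rfl | h
      · exact absurd rfl hdb
      · exact ⟨hdD, h⟩
    exact ⟨⟨b, hbD, hbinf⟩, haD, hbD, hrab, hbsucc⟩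
  choose g hg using key
  set e : ℕ → M := fun n => (g^[n] ⟨c, hc, hup⟩).1 with hedef
  have heD : ∀ n, e n ∈ D := fun n => (g^[n] ⟨c, hc, hup⟩).2.1
  have he0 : e 0 = c := rfl
  have hfs : ∀ n, SuccIn r D (e n) (e (n + 1)) := by
    intro n
    have h : g^[n + 1] ⟨c, hc, hup⟩ = g (g^[n] ⟨c, hc, hup⟩) :=
      Function.iterate_succ_apply' g n _
    show SuccIn r D (g^[n] ⟨c, hc, hup⟩).1 (g^[n + 1] ⟨c, hc, hup⟩).1
    rw [h]
    exact hg _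
  have mono : ∀ m n, m < n → r (e m) (e n) := by
    intro m n hmn
    obtain ⟨k, rfl⟩ := Nat.exists_eq_add_of_lt hmn
    clear hmn
    induction k with
    | zero => exact (hfs m).2.2.1
    | succ k ih =>
      exact htrans _ (heD m) _ (heD (m + k + 1)) _ (heD (m + k + 2)) ih (hfs (m + k + 1)).2.2.1
  have inj : Function.Injective e := by
    intro m n hmn
    by_contra hne
    rcases Nat.lt_or_ge m n with h | h
    · exact irr _ (heD m) (hmn ▸ mono m n h)
    · rcases Nat.lt_or_ge n m with h' | h'
      · exact irr _ (heD n) (hmn ▸ mono n m h')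
      · exact hne (le_antisymm h' h)
  have not_r_c : ∀ n, ¬ r (e n) c := by
    intro n hr
    rcases Nat.eq_zero_or_pos n with rfl | hn
    · exact irr c hc (he0 ▸ hr)
    · exact irr c hc (htrans _ hc _ (heD n) _ hc (he0 ▸ mono 0 n hn) hr)
  have interval : ∀ n d, d ∈ D → ¬ r d c → r d (e n) → ∃ m, m < n ∧ d = e m := by
    intro n
    induction n with
    | zero => exact fun d _ hdc hr => absurd (he0 ▸ hr) hdc
    | succ n ih =>
      intro d hdD hdc hr
      rcases total d hdD (e n) (heD n) with heq | hlt | hgt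
      · exact ⟨n, Nat.lt_succ_self n, heq⟩
      · obtain ⟨m, hm, hdm⟩ := ih d hdD hdc hlt
        exact ⟨m, Nat.lt_succ_of_lt hm, hdm⟩
      · rcases (hfs n).2.2.2 d hdD hgt with rfl | h
        · exact absurd hr (irr _ (heD (n + 1)))
        · exact absurd (htrans _ (heD (n + 1)) _ hdD _ (heD (n + 1)) h hr)
            (irr _ (heD (n + 1)))
  -- the chain is contained in dcl({c})
  have hchain : ∀ n b, (chainF δ lt c n).Realize (pval ![b]) ↔ b = e n := by
    intro n
    induction n with
    | zero =>
      intro b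
      show (eqParam (L := L) c).Realize (pval ![b]) ↔ b = e 0
      rw [realize_eqParam, he0]
    | succ n ih =>
      intro b
      rw [realize_chainF_succ]
      constructor
      · rintro ⟨y, hy, hs⟩
        rw [ih] at hy
        subst hy
        rw [realize_succF] at hs
        obtain ⟨_, hbD, hrb, hnom⟩ := hs
        have hr : r (e n) b := ⟨heD n, hbD, hrb⟩
        rcases (hfs n).2.2.2 b hbD hr with h | h
        · exact h
        · exact absurd ⟨e (n + 1), heD (n + 1), ((hfs n).2.2.1).2.2, h.2.2⟩ hnom
      · rintro rfl
        refine ⟨e n, (ih _).mpr rfl, ?_⟩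
        rw [realize_succF]
        refine ⟨heD n, heD (n + 1), ((hfs n).2.2.1).2.2, ?_⟩
        rintro ⟨z, hzD, h1, h2⟩
        have hr1 : r (e n) z := ⟨heD n, hzD, h1⟩
        rcases (hfs n).2.2.2 z hzD hr1 with rfl | h
        · exact irr _ (heD (n + 1)) ⟨hzD, heD (n + 1), h2⟩
        · exact irr _ (heD (n + 1))
            (htrans _ (heD (n + 1)) _ hzD _ (heD (n + 1)) h ⟨hzD, heD (n + 1), h2⟩)
  have hdcl : ∀ n, e n ∈ dclSet L ({c} : Set M) :=
    fun n => ⟨chainF δ lt c n, (hchain n (e n)).mpr rfl, fun b hb => (hchain n b).mp hb⟩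
  -- the sets cut out on the chain by formulas over {c}
  set X : L.Formula (↥({c} : Set M) ⊕ Fin 1) → Set M :=
    fun θ => {a ∈ Set.range e | θ.Realize (pval ![a])} with hXdef
  have hdefRel1 : ∀ a b : M, defRel ({c} : Set M) (liftF c lt) a b ↔ defRel (∅ : Set M) lt a b :=
    fun a b => realize_liftF c lt ![a, b]
  by_cases hθ : ∃ θ, (X θ).Infinite ∧
      ∀ φ : L.Formula (↥({c} : Set M) ⊕ Fin 1),
        (X (θ ⊓ φ)).Finite ∨ (X (θ ⊓ φ.not)).Finite
  · -- the decided case: build the simple type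
    obtain ⟨θ, hθinf, hθdec⟩ := hθ
    refine ⟨{φ | {a ∈ X θ | ¬ φ.Realize (pval ![a])}.Finite}, X θ,
      liftF c δ ⊓ (ltcF c lt).not ⊓ θ, liftF c lt, ?_, ?_, ?_, ?_, ?_, ?_, ?_⟩
    · -- IsCompleteType
      constructor
      · -- finitely satisfiable
        intro s hs
        have hfin : (⋃ φ ∈ s, {a ∈ X θ | ¬ φ.Realize (pval ![a])}).Finite :=
          Set.Finite.biUnion s.finite_toSet (fun φ hφ => hs hφ)
        obtain ⟨a, ha⟩ := (hθinf.diff hfin).nonempty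
        refine ⟨![a], fun φ hφ => ?_⟩
        by_contra hnr
        exact ha.2 (Set.mem_biUnion hφ ⟨ha.1, hnr⟩)
      · -- complete
        intro φ
        rcases hθdec φ with h | h
        · right
          refine h.subset ?_
          rintro a ⟨haX, hnr⟩
          have hφa : φ.Realize (pval ![a]) := by
            by_contra hn
            exact hnr (Formula.realize_not.mpr hn)
          exact ⟨haX.1, Formula.realize_inf.mpr ⟨haX.2, hφa⟩⟩
        · left
          refine h.subset ?_
          rintro a ⟨haX, hnr⟩
          exact ⟨haX.1, Formula.realize_inf.mpr ⟨haX.2, Formula.realize_not.mpr hnr⟩⟩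
    · exact hθinf
    · rintro a ⟨⟨m, rfl⟩, _⟩
      exact hdcl m
    · -- IsLinearOn
      have hmem : ∀ x : M, x ∈ defSet ({c} : Set M) (liftF c δ ⊓ (ltcF c lt).not ⊓ θ) →
          x ∈ D := by
        intro x hx
        have := (Formula.realize_inf.mp (Formula.realize_inf.mp hx).1).1
        exact (realize_liftF c δ ![x]).mp this
      refine ⟨?_, ?_, ?_⟩
      · intro a ha h
        exact irr a (hmem a ha) ⟨hmem a ha, hmem a ha, (hdefRel1 a a).mp h.2.2⟩
      · intro a ha b hb c' hc' h1 h2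
        have ht := htrans a (hmem a ha) b (hmem b hb) c' (hmem c' hc')
          ⟨hmem a ha, hmem b hb, (hdefRel1 a b).mp h1.2.2⟩
          ⟨hmem b hb, hmem c' hc', (hdefRel1 b c').mp h2.2.2⟩
        exact ⟨ha, hc', (hdefRel1 a c').mpr ht.2.2⟩
      · intro a ha b hb
        rcases total a (hmem a ha) b (hmem b hb) with h | h | h
        · exact Or.inl h
        · exact Or.inr (Or.inl ⟨ha, hb, (hdefRel1 a b).mpr h.2.2⟩)
        · exact Or.inr (Or.inr ⟨hb, ha, (hdefRel1 b a).mpr h.2.2⟩)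
    · -- IsInitialPart
      have hCsub : X θ ⊆ defSet ({c} : Set M) (liftF c δ ⊓ (ltcF c lt).not ⊓ θ) := by
        rintro a ⟨⟨m, rfl⟩, hθa⟩
        refine Formula.realize_inf.mpr ⟨Formula.realize_inf.mpr ⟨?_, ?_⟩, hθa⟩
        · exact (realize_liftF c δ ![e m]).mpr (heD m)
        · refine Formula.realize_not.mpr ?_
          intro hlt'
          exact not_r_c m ⟨heD m, hc, (realize_ltcF c lt (e m)).mp hlt'⟩
      refine ⟨hCsub, ?_⟩
      rintro a ⟨⟨m, rfl⟩, hθa⟩ d hd hgr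
      have hd1 := Formula.realize_inf.mp hd
      have hd2 := Formula.realize_inf.mp hd1.1
      have hdD : d ∈ D := (realize_liftF c δ ![d]).mp hd2.1
      have hdc : ¬ r d c := by
        intro hr
        exact (Formula.realize_not.mp hd2.2) ((realize_ltcF c lt d).mpr hr.2.2)
      have hrda : r d (e m) := ⟨hdD, heD m, (hdefRel1 d (e m)).mp hgr.2.2⟩
      obtain ⟨k, _, rfl⟩ := interval m d hdD hdc hrda
      exact ⟨⟨k, rfl⟩, hd1.2⟩
    · -- HasOrderTypeOmega
      refine ⟨hθinf, ?_⟩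
      rintro a ⟨⟨n, rfl⟩, _⟩
      refine Set.Finite.subset ((Set.finite_Iio n).image e) ?_
      rintro a' ⟨⟨⟨m, rfl⟩, _⟩, hgr⟩
      have hd1 := Formula.realize_inf.mp (hgr.1)
      have hd2 := Formula.realize_inf.mp hd1.1
      have hdc : ¬ r (e m) c := not_r_c m
      have hrda : r (e m) (e n) := ⟨heD m, heD n, (hdefRel1 (e m) (e n)).mp hgr.2.2⟩
      obtain ⟨k, hk, hek⟩ := interval n (e m) (heD m) hdc hrda
      exact ⟨k, hk, hek.symm⟩
    · exact fun φ => Iff.rfl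
  · -- the splitting case: contradiction with countability of S₂(T)
    exfalso
    have hsplit : ∀ θ : L.Formula (↥({c} : Set M) ⊕ Fin 1), (X θ).Infinite →
        ∃ φ, (X (θ ⊓ φ)).Infinite ∧ (X (θ ⊓ φ.not)).Infinite := by
      intro θ hi
      by_contra hcon
      push_neg at hcon
      refine hθ ⟨θ, hi, fun φ => ?_⟩
      rcases Set.finite_or_infinite (X (θ ⊓ φ)) with h | h
      · exact Or.inl h
      · exact Or.inr (hcon φ h)
    choose sel hsel1 hsel2 using hsplit
    have htop : (X (⊤ : L.Formula (↥({c} : Set M) ⊕ Fin 1))).Infinite := by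
      refine Set.Infinite.mono ?_ (Set.infinite_range_of_injective inj)
      intro a ha
      exact ⟨ha, Formula.realize_top.mpr trivial⟩
    set G : List Bool → {θ : L.Formula (↥({c} : Set M) ⊕ Fin 1) // (X θ).Infinite} :=
      treeNode ⟨⊤, htop⟩ (fun θi b => match b with
        | true => ⟨θi.1 ⊓ sel θi.1 θi.2, hsel1 θi.1 θi.2⟩
        | false => ⟨θi.1 ⊓ (sel θi.1 θi.2).not, hsel2 θi.1 θi.2⟩) with hGdef
    have hGcons : ∀ (t : List Bool) (b : Bool) (a : M),
        ((G (b :: t)).1).Realize (pval ![a]) → ((G t).1).Realize (pval ![a]) := by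
      intro t b a h
      cases b
      · exact (Formula.realize_inf.mp h).1
      · exact (Formula.realize_inf.mp h).1
    have hGchain : ∀ (s : ℕ → Bool) (n m : ℕ), m ≤ n → ∀ a : M,
        ((G (branchList s n)).1).Realize (pval ![a]) →
        ((G (branchList s m)).1).Realize (pval ![a]) := by
      intro s n
      induction n with
      | zero =>
        intro m hm a h
        rw [Nat.le_zero.mp hm]
        exact h
      | succ n ih =>
        intro m hm a h
        rcases Nat.eq_or_lt_of_le hm with rfl | h'
        · exact h
        · exact ih m (Nat.lt_succ_iff.mp h') a (hGcons _ _ _ h)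
    have hA : ∀ s : ℕ → Bool, ∃ a : M, ∀ n, ((G (branchList s n)).1).Realize (pval ![a]) := by
      intro s
      have hfsat : FinSat ({c} : Set M) {φ | ∃ n, φ = (G (branchList s n)).1} := by
        intro t ht
        set idx : L.Formula (↥({c} : Set M) ⊕ Fin 1) → ℕ :=
          fun φ => if h : ∃ n, φ = (G (branchList s n)).1 then h.choose else 0 with hidx
        set N := t.sup idx with hN
        obtain ⟨a, ha⟩ := ((G (branchList s N)).2).nonempty
        refine ⟨![a], fun φ hφ => ?_⟩
        have h' : ∃ n, φ = (G (branchList s n)).1 := ht hφ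
        have heq : φ = (G (branchList s (idx φ))).1 := by
          rw [hidx]
          simp only [dif_pos h']
          exact h'.choose_spec
        rw [heq]
        exact hGchain s N (idx φ) (Finset.le_sup hφ) a ha.2
      obtain ⟨a, ha⟩ := hsat {c} (Set.countable_singleton c) _ hfsat
      exact ⟨a, fun n => ha _ ⟨n, rfl⟩⟩
    choose aa haa using hA
    set q : (ℕ → Bool) → Set (L.Formula (↥(∅ : Set M) ⊕ Fin 2)) :=
      fun s => {ψ | ψ.Realize (pval ![aa s, c])} with hqdef
    have hqC : ∀ s, IsCompleteType (∅ : Set M) (q s) := by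
      intro s
      constructor
      · intro t ht
        exact ⟨![aa s, c], fun ψ hψ => ht hψ⟩
      · intro ψ
        by_cases h : ψ.Realize (pval ![aa s, c])
        · exact Or.inl h
        · exact Or.inr (Formula.realize_not.mpr h)
    have hqinj : Function.Injective q := by
      intro s s' hq
      by_contra hne
      have hex : ∃ n, s n ≠ s' n := by
        by_contra h
        push_neg at h
        exact hne (funext h)
      set n := Nat.find hex with hn
      have hagree : ∀ i, i < n → s i = s' i := fun i hi => not_not.mp (Nat.find_min hex hi)
      have hbl : branchList s n = branchList s' n := branchList_congr n hagree
      have h1 : ((G (branchList s (n + 1))).1).Realize (pval ![aa s]) := haa s (n + 1)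
      have h2 : ((G (branchList s' (n + 1))).1).Realize (pval ![aa s']) := haa s' (n + 1)
      have hb1 : branchList s (n + 1) = s n :: branchList s n := rfl
      have hb2 : branchList s' (n + 1) = s' n :: branchList s n := by
        rw [hbl]; rfl
      rw [hb1] at h1
      rw [hb2] at h2
      have hspec : s n ≠ s' n := Nat.find_spec hex
      -- the splitting formula at the branching node
      set θn := G (branchList s n) with hθn
      set φn := sel θn.1 θn.2 with hφn
      have hcontra : ¬ (φn.Realize (pval ![aa s]) ↔ φn.Realize (pval ![aa s'])) := by
        cases hsn : s n <;> cases hsn' : s' n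
        · rw [hsn, hsn'] at hspec; exact absurd rfl hspec
        · -- s n = false, s' n = true
          rw [hsn] at h1
          rw [hsn'] at h2
          have hns : ¬ φn.Realize (pval ![aa s]) :=
            Formula.realize_not.mp (Formula.realize_inf.mp h1).2
          have hys : φn.Realize (pval ![aa s']) := (Formula.realize_inf.mp h2).2
          intro hiff
          exact hns (hiff.mpr hys)
        · -- s n = true, s' n = false
          rw [hsn] at h1
          rw [hsn'] at h2
          have hys : φn.Realize (pval ![aa s]) := (Formula.realize_inf.mp h1).2
          have hns : ¬ φn.Realize (pval ![aa s']) :=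
            Formula.realize_not.mp (Formula.realize_inf.mp h2).2
          intro hiff
          exact hns (hiff.mp hys)
        · rw [hsn, hsn'] at hspec; exact absurd rfl hspec
      apply hcontra
      constructor
      · intro h
        have : toTwo c φn ∈ q s := (realize_toTwo c φn (aa s)).mpr h
        rw [hq] at this
        exact (realize_toTwo c φn (aa s')).mp this
      · intro h
        have : toTwo c φn ∈ q s' := (realize_toTwo c φn (aa s')).mpr h
        rw [← hq] at this
        exact (realize_toTwo c φn (aa s)).mp this
    haveI := hS2.to_subtype
    have Finj : Function.Injective
        (fun s : ℕ → Bool => (⟨q s, hqC s⟩ :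
          ↥{q' : Set (L.Formula (↥(∅ : Set M) ⊕ Fin 2)) |
            IsCompleteType (∅ : Set M) q'})) := by
      intro s s' h
      exact hqinj (congrArg Subtype.val h)
    exact not_countable_funBool (Finj.countable)

end Main

/-- Lemma 4. If `S₂(T)` is countable and `(D, <)` is an infinite
discrete linear order definable in `M` without parameters, then for every `c ∈ D`
there exists a simple type `p ∈ S₁({c})`. -/
theorem statement9 (L : FirstOrder.Language.{u, v}) (hL : L.card ≤ ℵ₀)
    (T : L.Theory) (hT : T.IsComplete)
    (M : Type w) [L.Structure M] (hMT : M ⊨ T) (hMinf : Infinite M)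
    (hsat : IsAleph1Saturated L M)
    (hS2 : {q : Set (L.Formula (↥(∅ : Set M) ⊕ Fin 2)) |
              IsCompleteType (∅ : Set M) q}.Countable)
    (δ : L.Formula (↥(∅ : Set M) ⊕ Fin 1)) (lt : L.Formula (↥(∅ : Set M) ⊕ Fin 2))
    (hDinf : (defSet (∅ : Set M) δ).Infinite)
    (hlin : IsLinearOn (gRel (∅ : Set M) δ lt) (defSet (∅ : Set M) δ))
    (hdisc : IsDiscreteOn (gRel (∅ : Set M) δ lt) (defSet (∅ : Set M) δ)) :
    ∀ c ∈ defSet (∅ : Set M) δ,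
      ∃ (p : Set (L.Formula (↥({c} : Set M) ⊕ Fin 1))) (C : Set M)
        (δ₁ : L.Formula (↥({c} : Set M) ⊕ Fin 1)) (lt₁ : L.Formula (↥({c} : Set M) ⊕ Fin 2)),
        IsSimpleWitness ({c} : Set M) p C δ₁ lt₁ := by
  intro c hcD
  have hswap : ∀ a b : M, defRel (∅ : Set M) (atVar2 lt 1 0) a b ↔ defRel (∅ : Set M) lt b a :=
    fun a b => realize_atVar2 lt 1 0 ![a, b]
  have hgr_swap : ∀ a b : M, gRel (∅ : Set M) δ (atVar2 lt 1 0) a b ↔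
      gRel (∅ : Set M) δ lt b a := by
    intro a b
    constructor
    · rintro ⟨h1, h2, h3⟩
      exact ⟨h2, h1, (hswap a b).mp h3⟩
    · rintro ⟨h1, h2, h3⟩
      exact ⟨h2, h1, (hswap a b).mpr h3⟩
  have hsplit : {d ∈ defSet (∅ : Set M) δ | gRel (∅ : Set M) δ lt c d}.Infinite ∨
      {d ∈ defSet (∅ : Set M) δ | gRel (∅ : Set M) δ lt d c}.Infinite := by
    by_contra h
    push_neg at h
    obtain ⟨h1, h2⟩ := h
    refine hDinf (Set.Finite.subset ((h2.union h1).union (Set.finite_singleton c)) ?_)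
    intro d hd
    rcases hlin.2.2 d hd c hcD with rfl | h | h
    · exact Or.inr rfl
    · exact Or.inl (Or.inl ⟨hd, h⟩)
    · exact Or.inl (Or.inr ⟨hd, h⟩)
  rcases hsplit with hup | hdown
  · exact main_lemma hsat hS2 δ lt hlin hdisc.1 c hcD hup
  · refine main_lemma hsat hS2 δ (atVar2 lt 1 0) ⟨?_, ?_, ?_⟩ ?_ c hcD ?_
    · intro a ha h
      exact hlin.1 a ha ((hgr_swap a a).mp h)
    · intro a ha b hb c' hc' h1 h2
      exact (hgr_swap a c').mpr
        (hlin.2.1 c' hc' b hb a ha ((hgr_swap b c').mp h2) ((hgr_swap a b).mp h1))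
    · intro a ha b hb
      rcases hlin.2.2 a ha b hb with h | h | h
      · exact Or.inl h
      · exact Or.inr (Or.inr ((hgr_swap b a).mpr h))
      · exact Or.inr (Or.inl ((hgr_swap a b).mpr h))
    · intro a ha hex
      obtain ⟨b, hbD, hrb⟩ := hex
      obtain ⟨b', hb'D, hrb', hbmax⟩ := hdisc.2 a ha ⟨b, hbD, (hgr_swap a b).mp hrb⟩
      refine ⟨b', hb'D, (hgr_swap a b').mpr hrb', ?_⟩
      intro e heD hre
      rcases hbmax e heD ((hgr_swap a e).mp hre) with h | h
      · exact Or.inl h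
      · exact Or.inr ((hgr_swap b' e).mpr h)
    · have heq : {d ∈ defSet (∅ : Set M) δ | gRel (∅ : Set M) δ (atVar2 lt 1 0) c d} =
          {d ∈ defSet (∅ : Set M) δ | gRel (∅ : Set M) δ lt d c} := by
        ext d
        exact and_congr_right fun _ => hgr_swap c d
      rw [heq]
      exact hdown

end PaperDef
end
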